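/- arXiv:2303.05687 — 4 statements merged into one kernel-verified Lean document; each statement's English description precedes it below -/
import Mathlib

section
/- Let H be an N×N circulant matrix generated by a vector [h_0, ..., h_{N-1}] with at least two consecutive nonzero entries h_m ≠ 0 and h_{m+1} ≠ 0 (indices mod N). Let A = diag(a_0,...,a_{N-1}) and B = diag(b_0,...,b_{N-1}) be diagonal matrices. Then A·H = H·B if and only if there exists a constant λ such that A = B = λI. -/
/-- Gathering/scattering commutation theorem: for a circulant matrix with two
consecutive nonzero generator entries, `A * H = H * B` iff `A = B = λ I`. -/
theorem stmt_0 (N : ℕ) [NeZero N] (h a b : ZMod N → ℝ) (m : ZMod N)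
    (hm : h m ≠ 0) (hm1 : h (m + 1) ≠ 0) :
    Matrix.diagonal a * Matrix.of (fun i j : ZMod N => h (j - i)) =
      Matrix.of (fun i j : ZMod N => h (j - i)) * Matrix.diagonal b ↔
    ∃ lam : ℝ, Matrix.diagonal a = lam • (1 : Matrix (ZMod N) (ZMod N) ℝ) ∧
      Matrix.diagonal b = lam • (1 : Matrix (ZMod N) (ZMod N) ℝ) := by
  constructor
  · intro heq
    have key : ∀ i j : ZMod N, a i * h (j - i) = h (j - i) * b j := by
      intro i j
      have := congrFun (congrFun heq i) j
      simpa [Matrix.diagonal_mul, Matrix.mul_diagonal] using this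
    have key1 : ∀ i : ZMod N, a i = b (i + m) := by
      intro i
      have := key i (i + m)
      simp only [add_sub_cancel_left] at this
      rw [mul_comm (h m)] at this
      exact mul_right_cancel₀ hm this
    have key2 : ∀ i : ZMod N, a i = b (i + m + 1) := by
      intro i
      have := key i (i + m + 1)
      have e : i + m + 1 - i = m + 1 := by ring
      rw [e, mul_comm (h (m + 1))] at this
      exact mul_right_cancel₀ hm1 this
    have bstep : ∀ x : ZMod N, b x = b (x + 1) := by
      intro x
      have := (key1 (x - m)).symm.trans (key2 (x - m))
      simpa [sub_add_cancel] using this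
    have bnat : ∀ n : ℕ, b (n : ZMod N) = b 0 := by
      intro n
      induction n with
      | zero => simp
      | succ k ih =>
        have := bstep (k : ZMod N)
        push_cast
        rw [← this]
        exact ih
    have bconst : ∀ x : ZMod N, b x = b 0 := by
      intro x
      have := bnat x.val
      rwa [ZMod.natCast_val, ZMod.cast_id] at this
    refine ⟨b 0, ?_, ?_⟩
    · ext i j
      by_cases hij : i = j
      · subst hij
        simp [Matrix.one_apply, key1 i, bconst (i + m)]
      · simp [Matrix.diagonal, Matrix.one_apply, hij]
    · ext i j
      by_cases hij : i = j
      · subst hij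
        simp [Matrix.one_apply, bconst i]
      · simp [Matrix.diagonal, Matrix.one_apply, hij]
  · rintro ⟨lam, ha, hb⟩
    rw [ha, hb, Matrix.smul_mul, Matrix.mul_smul, one_mul, mul_one]
end

section
/- Let H be an N×N circulant matrix generated by [h_0,...,h_{N-1}] with two consecutive nonzero entries h_m ≠ 0 and h_{m+1} ≠ 0 (indices mod N), and let D be a diagonal matrix. If D·H = H·D, then D is a scalar multiple of the identity. -/
/-- If a diagonal matrix commutes with a circulant matrix having two consecutive
nonzero generator entries, then it is a scalar multiple of the identity. -/
theorem stmt_4 (N : ℕ) [NeZero N] (h d : ZMod N → ℝ) (m : ZMod N)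
    (hm : h m ≠ 0) (hm1 : h (m + 1) ≠ 0)
    (hcomm : Matrix.diagonal d * Matrix.of (fun i j : ZMod N => h (j - i)) =
      Matrix.of (fun i j : ZMod N => h (j - i)) * Matrix.diagonal d) :
    ∃ lam : ℝ, Matrix.diagonal d = lam • (1 : Matrix (ZMod N) (ZMod N) ℝ) := by
  have key : ∀ i j : ZMod N, (d i - d j) * h (j - i) = 0 := by
    intro i j
    have := congrFun (congrFun hcomm i) j
    simp [Matrix.diagonal_mul, Matrix.mul_diagonal] at this
    linear_combination this
  have step : ∀ i : ZMod N, d (i + 1) = d i := by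
    intro i
    have h1 := key (i + 1) (i + 1 + m)
    have h2 := key i (i + m + 1)
    have e1 : (i + 1 + m) - (i + 1) = m := by ring
    have e2 : (i + m + 1) - i = m + 1 := by ring
    rw [e1] at h1
    rw [e2] at h2
    have q1 : d (i + 1) = d (i + 1 + m) := by
      rcases mul_eq_zero.1 h1 with hc | hc
      · linarith [sub_eq_zero.1 hc]
      · exact absurd hc hm
    have q2 : d i = d (i + m + 1) := by
      rcases mul_eq_zero.1 h2 with hc | hc
      · linarith [sub_eq_zero.1 hc]
      · exact absurd hc hm1
    have e3 : i + 1 + m = i + m + 1 := by ring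
    rw [q1, e3, ← q2]
  have aux : ∀ k : ℕ, d (k : ZMod N) = d 0 := by
    intro k
    induction k with
    | zero => simp
    | succ n ih => push_cast; rw [step, ih]
  have const : ∀ i : ZMod N, d i = d 0 := by
    intro i
    have := aux i.val
    rwa [ZMod.natCast_val, ZMod.cast_id] at this
  refine ⟨d 0, ?_⟩
  ext i j
  by_cases hij : i = j
  · subst hij; simp [const i]
  · simp [Matrix.diagonal_apply_ne _ hij, Matrix.one_apply_ne hij]
end

section
/- Let H be an N×N circulant matrix with at least two consecutive nonzero generator entries, and suppose D^(g) and D^(s) are diagonal matrices with D^(g)·H = H·D^(s). If additionally D^(g) is not a scalar multiple of the identity, a contradiction follows; equivalently, the equality D^(g)·H = H·D^(s) forces D^(g) = D^(s) = λI for some scalar λ. -/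
/-- For circulant `H` with two consecutive nonzero generator entries,
`D⁽ᵍ⁾ H = H D⁽ˢ⁾` forces `D⁽ᵍ⁾ = D⁽ˢ⁾ = λ I`. -/
theorem stmt_7 (N : ℕ) [NeZero N] (h dg ds : ZMod N → ℝ) (m : ZMod N)
    (hm : h m ≠ 0) (hm1 : h (m + 1) ≠ 0)
    (heq : Matrix.diagonal dg * Matrix.of (fun i j : ZMod N => h (j - i)) =
      Matrix.of (fun i j : ZMod N => h (j - i)) * Matrix.diagonal ds) :
    ∃ lam : ℝ, Matrix.diagonal dg = lam • (1 : Matrix (ZMod N) (ZMod N) ℝ) ∧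
      Matrix.diagonal ds = lam • (1 : Matrix (ZMod N) (ZMod N) ℝ) := by
  have key : ∀ i j : ZMod N, dg i * h (j - i) = h (j - i) * ds j := by
    intro i j
    have := congrFun (congrFun heq i) j
    simpa [Matrix.diagonal_mul, Matrix.mul_diagonal] using this
  have h1 : ∀ i : ZMod N, dg i = ds (i + m) := by
    intro i
    have := key i (i + m)
    simp only [add_sub_cancel_left] at this
    have := mul_right_cancel₀ hm (by linarith : dg i * h m = ds (i + m) * h m)
    exact this
  have h2 : ∀ i : ZMod N, dg i = ds (i + m + 1) := by
    intro i
    have := key i (i + m + 1)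
    have hsub : i + m + 1 - i = m + 1 := by ring
    rw [hsub] at this
    exact mul_right_cancel₀ hm1 (by linarith : dg i * h (m+1) = ds (i + m + 1) * h (m+1))
  have hstep : ∀ i : ZMod N, dg (i + 1) = dg i := by
    intro i
    have := h1 (i + 1)
    rw [show i + 1 + m = i + m + 1 by ring] at this
    rw [this, ← h2 i]
  have hconst : ∀ i : ZMod N, dg i = dg 0 := by
    intro i
    obtain ⟨n, rfl⟩ := ZMod.natCast_zmod_surjective (n := N) i
    induction n with
    | zero => simp
    | succ k ih =>
      have : ((k + 1 : ℕ) : ZMod N) = (k : ZMod N) + 1 := by push_cast; ring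
      rw [this, hstep, ih]
  have hdsconst : ∀ k : ZMod N, ds k = dg 0 := by
    intro k
    have := h1 (k - m)
    rw [sub_add_cancel] at this
    rw [← this, hconst]
  refine ⟨dg 0, ?_, ?_⟩ <;>
  · ext i j
    by_cases hij : i = j <;>
      simp [Matrix.diagonal_apply, Matrix.one_apply, hij, hconst, hdsconst]
end

section
/- Let H be an N×N circulant matrix generated by h with consecutive nonzero entries h_m ≠ 0, h_{m+1} ≠ 0, and let D₁ be a diagonal matrix that is not a scalar multiple of the identity. Then D₁·H ≠ H·D₂ for every diagonal matrix D₂; i.e., the gathering form D₁·H cannot be rewritten as a scattering form H·D₂ unless D₁ is a scalar matrix. -/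
/-- If `D₁` is a non-scalar diagonal matrix, then a gathering form `D₁ H`
(with circulant `H` having two consecutive nonzero generator entries) cannot be
rewritten as any scattering form `H D₂`. -/
theorem stmt_18 (N : ℕ) [NeZero N] (h d₁ : ZMod N → ℝ) (m : ZMod N)
    (hm : h m ≠ 0) (hm1 : h (m + 1) ≠ 0)
    (hnonscalar : ¬ ∃ lam : ℝ,
      Matrix.diagonal d₁ = lam • (1 : Matrix (ZMod N) (ZMod N) ℝ)) :
    ∀ d₂ : ZMod N → ℝ,
      Matrix.diagonal d₁ * Matrix.of (fun i j : ZMod N => h (j - i)) ≠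
        Matrix.of (fun i j : ZMod N => h (j - i)) * Matrix.diagonal d₂ := by
  intro d₂ heq
  have key : ∀ i j : ZMod N, d₁ i * h (j - i) = h (j - i) * d₂ j := by
    intro i j
    have := congrFun (congrFun heq i) j
    simpa [Matrix.diagonal_mul, Matrix.mul_diagonal] using this
  have h1 : ∀ i : ZMod N, d₁ i = d₂ (i + m) := by
    intro i
    have hk := key i (i + m)
    rw [add_sub_cancel_left] at hk
    rw [mul_comm (h m)] at hk
    exact mul_right_cancel₀ hm hk
  have h2 : ∀ i : ZMod N, d₁ i = d₂ (i + m + 1) := by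
    intro i
    have hk := key i (i + m + 1)
    have : i + m + 1 - i = m + 1 := by ring
    rw [this, mul_comm (h (m + 1))] at hk
    exact mul_right_cancel₀ hm1 hk
  have hstep : ∀ x : ZMod N, d₂ (x + 1) = d₂ x := by
    intro x
    have e1 := h1 (x - m)
    have e2 := h2 (x - m)
    rw [sub_add_cancel] at e1 e2
    rw [← e1, e2]
  have hnat : ∀ n : ℕ, d₂ (n : ZMod N) = d₂ 0 := by
    intro n
    induction n with
    | zero => simp
    | succ k ih => push_cast; rw [hstep, ih]
  have hconst : ∀ x : ZMod N, d₂ x = d₂ 0 := by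
    intro x
    have := hnat x.val
    rwa [ZMod.natCast_rightInverse x] at this
  apply hnonscalar
  refine ⟨d₂ 0, ?_⟩
  ext i j
  by_cases hij : i = j
  · subst hij
    simp [Matrix.one_apply, h1 i, hconst]
  · simp [Matrix.diagonal_apply_ne _ hij, Matrix.one_apply_ne hij]
end
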